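/- For x,y ∈ (3/16, −1/16) the function f(x,y) = x² + y² + 9/32 + 2·max(|x/8 + 3y/8| − 1/16, −5x/8 + y/8 + 1/16) attains its global minimum over ℝ², with minimum value 25/128. -/

import Mathlib

/-!
At `(3/16, -1/16)` the linear form `x/8 + 3y/8` vanishes and both arguments of the `max` equal
`-1/16`. Bounding the `max` below by its convex combination with weights `11/16, 5/16`, and
`|u|` below by `u/11`, gives an affine minorant of the `max`-term whose gradient cancels that
of `x² + y²` at this point, so `hexObj` dominates the paraboloid
`(x - 3/16)² + (y + 1/16)² + 25/128`, which touches it there.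
-/

/-- Squared-diameter objective for the `m = 8` hexagonal torus tiling. -/
noncomputable def hexObj (x y : ℝ) : ℝ :=
  x^2 + y^2 + 9/32 + 2 * max (|x/8 + 3*y/8| - 1/16) (-5*x/8 + y/8 + 1/16)

theorem hexObj_three_div_sixteen : hexObj (3/16) (-1/16) = 25/128 := by
  have hform : (3 : ℝ)/16/8 + 3*(-1/16)/8 = 0 := by norm_num
  rw [hexObj, hform, abs_zero]
  norm_num

theorem sq_add_sq_add_le_hexObj (x y : ℝ) :
    (x - 3/16)^2 + (y + 1/16)^2 + 25/128 ≤ hexObj x y := by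
  have hmax := Convex.combo_le_max (|x/8 + 3*y/8| - 1/16) (-5*x/8 + y/8 + 1/16)
    (a := (11/16 : ℝ)) (b := 5/16) (by norm_num) (by norm_num) (by norm_num)
  simp only [smul_eq_mul] at hmax
  have habs : (x/8 + 3*y/8) / 11 ≤ |x/8 + 3*y/8| := by
    linarith [le_abs_self (x/8 + 3*y/8), abs_nonneg (x/8 + 3*y/8)]
  rw [hexObj]
  linarith

theorem hexObj_min :
    hexObj (3/16) (-1/16) = 25/128 ∧ ∀ x y : ℝ, 25/128 ≤ hexObj x y :=
  ⟨hexObj_three_div_sixteen, fun x y =>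
    (le_add_of_nonneg_left (by positivity)).trans (sq_add_sq_add_le_hexObj x y)⟩
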